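/- Every Hoare–McCarthy algebra satisfies the conditional equation: if T ◁ x ▷ T = T and T ◁ y ▷ T = T, then T ◁ x ▷ y = T ◁ y ▷ x. -/

import Mathlib

/-!
Applying both sides of `T ◁ x ▷ T = T` to a state shows that `x` leaves every state unchanged,
and likewise `y`. For such `x` and `y` the term `T ◁ x ▷ y` also leaves the state unchanged,
and its reply is `T ◁ (x ! s) ▷ (y ! s)`: the disjunction of two truth values, which is symmetric.
Extensionality concludes.
-/

/-- A stateful proposition algebra (SPA): a two-sorted structure with conditional
expressions satisfying the CP axioms, states with a conditional, and apply/reply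
operations satisfying (SPA1)-(SPA7). -/
structure SPA (A : Type) where
  C : Type
  S : Type
  tt : C
  ff : C
  atom : A → C
  cond : C → C → C → C
  scond : S → C → S → S
  rep : C → S → C
  app : C → S → S
  cp1 : ∀ x y, cond x tt y = x
  cp2 : ∀ x y, cond x ff y = y
  cp3 : ∀ x, cond tt x ff = x
  cp4 : ∀ x y z u v, cond x (cond y z u) v = cond (cond x y v) z (cond x u v)
  ts1 : ∀ s s', scond s tt s' = s
  ts2 : ∀ s s', scond s ff s' = s'
  spa1 : ∀ s, rep tt s = tt
  spa2 : ∀ s, rep ff s = ff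
  spa3 : ∀ x y z s, rep (cond x y z) s = cond (rep x (app y s)) (rep y s) (rep z (app y s))
  spa4 : ∀ s, app tt s = s
  spa5 : ∀ s, app ff s = s
  spa6 : ∀ x y z s, app (cond x y z) s = scond (app x (app y s)) (rep y s) (app z (app y s))
  spa7 : ∀ x s, rep x s = tt ∨ rep x s = ff
  spa8 : ∀ x y, (∀ s, rep x s = rep y s ∧ app x s = app y s) → x = y

namespace SPA

variable {A : Type} (P : SPA A)

theorem scond_rep_self (t : P.S) (x : P.C) (s : P.S) : P.scond t (P.rep x s) t = t := by
  rcases P.spa7 x s with h | h <;> rw [h]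
  exacts [P.ts1 t t, P.ts2 t t]

theorem app_cond_tt_tt (x : P.C) (s : P.S) : P.app (P.cond P.tt x P.tt) s = P.app x s := by
  rw [P.spa6, P.spa4, scond_rep_self]

theorem app_eq_self_of_cond_tt_tt {x : P.C} (hx : P.cond P.tt x P.tt = P.tt) (s : P.S) :
    P.app x s = s := by
  rw [← app_cond_tt_tt, hx, P.spa4]

theorem cond_tt_comm_of_two_valued {a b : P.C} (ha : a = P.tt ∨ a = P.ff)
    (hb : b = P.tt ∨ b = P.ff) : P.cond P.tt a b = P.cond P.tt b a := by
  rcases ha with rfl | rfl <;> rcases hb with rfl | rfl <;> simp only [P.cp1, P.cp2]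

variable {P} {x : P.C}

theorem rep_cond_tt_of_app_eq_self (hx : ∀ s, P.app x s = s) (y : P.C) (s : P.S) :
    P.rep (P.cond P.tt x y) s = P.cond P.tt (P.rep x s) (P.rep y s) := by
  rw [P.spa3, P.spa1, hx]

theorem app_cond_tt_of_app_eq_self {y : P.C} (hx : ∀ s, P.app x s = s)
    (hy : ∀ s, P.app y s = s) (s : P.S) : P.app (P.cond P.tt x y) s = s := by
  rw [P.spa6, P.spa4, hx, hy, scond_rep_self]

end SPA

/-- In any Hoare–McCarthy algebra (the conditional-expression reduct of an SPA):
if T ◁ x ▷ T = T and T ◁ y ▷ T = T then T ◁ x ▷ y = T ◁ y ▷ x. -/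
theorem hma_conditional_equation (A : Type) (P : SPA A) (x y : P.C)
    (hx : P.cond P.tt x P.tt = P.tt) (hy : P.cond P.tt y P.tt = P.tt) :
    P.cond P.tt x y = P.cond P.tt y x := by
  have hax := P.app_eq_self_of_cond_tt_tt hx
  have hay := P.app_eq_self_of_cond_tt_tt hy
  refine P.spa8 _ _ fun s => ⟨?_, ?_⟩
  · rw [SPA.rep_cond_tt_of_app_eq_self hax, SPA.rep_cond_tt_of_app_eq_self hay]
    exact P.cond_tt_comm_of_two_valued (P.spa7 x s) (P.spa7 y s)
  · rw [SPA.app_cond_tt_of_app_eq_self hax hay, SPA.app_cond_tt_of_app_eq_self hay hax]
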